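/- arXiv:2605.24909 — 6 statements merged into one kernel-verified Lean document; each statement's English description precedes it below -/
import Mathlib

section
/- Let U be the Lucas sequence with parameters P, Q where Q = ±1. Then for all positive integers m, n one has gcd(U_{m+n}, U_n) = gcd(U_m, U_n) (in absolute value). -/
/-!
By the addition formula `U (m + n + 1) = U (m + 1) * U (n + 1) + Q * U m * U n`, the term
`U (m + n)` is congruent to `U m * U (n + 1)` modulo `U n`; and consecutive terms are coprime
because `Q` is a unit, so the factor `U (n + 1)` can be cancelled from the gcd.
-/

theorem Int.gcd_mul_right_cancel_of_isCoprime {a b c : ℤ} (h : IsCoprime c b) :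
    Int.gcd (a * c) b = Int.gcd a b := by
  rw [Int.gcd, Int.natAbs_mul]
  exact Nat.Coprime.gcd_mul_right_cancel _ (Int.isCoprime_iff_gcd_eq_one.mp h)

section LucasSequence

variable {R : Type*} [CommRing R] {P Q : R} {U : ℕ → R}

theorem lucas_add_succ (h0 : U 0 = 0) (h1 : U 1 = 1)
    (hrec : ∀ n, U (n + 2) = P * U (n + 1) + Q * U n) (m n : ℕ) :
    U (m + n + 1) = U (m + 1) * U (n + 1) + Q * U m * U n := by
  induction m using Nat.twoStepInduction generalizing n with
  | zero => simp [h0, h1]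
  | one =>
    have hU2 : U 2 = P := by simpa [h0, h1] using hrec 0
    rw [show 1 + n + 1 = n + 2 by ring, hrec, hU2, h1]
    ring
  | more m ih ih' =>
    rw [show m + 2 + n + 1 = (m + n + 1) + 2 by ring, hrec,
      show m + n + 1 + 1 = (m + 1) + n + 1 by ring, ih, ih', hrec (m + 1), hrec m]
    ring

theorem isCoprime_lucas_succ (hQ : IsUnit Q) (h1 : U 1 = 1)
    (hrec : ∀ n, U (n + 2) = P * U (n + 1) + Q * U n) (n : ℕ) :
    IsCoprime (U (n + 1)) (U n) := by
  induction n with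
  | zero => simpa [h1] using isCoprime_one_left
  | succ n ih =>
    rw [hrec, IsCoprime.mul_add_right_left_iff, isCoprime_mul_unit_left_left hQ]
    exact ih.symm

end LucasSequence

theorem lucas_gcd_reduction
    (P Q : ℤ) (hQ : Q = 1 ∨ Q = -1)
    (U : ℕ → ℤ) (h0 : U 0 = 0) (h1 : U 1 = 1)
    (hrec : ∀ n, U (n + 2) = P * U (n + 1) + Q * U n) :
    ∀ m n : ℕ, 1 ≤ m → 1 ≤ n →
      Int.gcd (U (m + n)) (U n) = Int.gcd (U m) (U n) := by
  intro m n hm _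
  obtain ⟨k, rfl⟩ : ∃ k, m = k + 1 := ⟨m - 1, by omega⟩
  have hcop := isCoprime_lucas_succ (Int.isUnit_iff.mpr hQ) h1 hrec n
  calc Int.gcd (U (k + 1 + n)) (U n)
      = Int.gcd (U (k + 1) * U (n + 1) + U n * (Q * U k)) (U n) := by
        rw [add_right_comm, lucas_add_succ h0 h1 hrec]
        ring_nf
    _ = Int.gcd (U (k + 1)) (U n) := by
        rw [Int.gcd_add_mul_left_left, Int.gcd_mul_right_cancel_of_isCoprime hcop]
end

section
/- Let U be the Lucas sequence with parameters P, Q where Q = ±1. Then U is a strong divisibility sequence: for all positive integers a, b, gcd(|U_a|, |U_b|) = |U_{gcd(a,b)}|. -/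
/-!
The addition formula `U (m + n + 1) = U (m + 1) U (n + 1) + Q U m U n`, together with the
coprimality of consecutive terms (which needs `Q` to be a unit), gives
`gcd (U (m + n)) (U n) = gcd (U m) (U n)`. Hence `n ↦ |U n|` is compatible with the subtraction
steps of the Euclidean algorithm, exactly as for the Fibonacci numbers.
-/

theorem Nat.IsStrongDvdSequence.of_gcd_add_self {f : ℕ → ℕ} (h0 : f 0 = 0)
    (h : ∀ m n, gcd (f (m + n)) (f n) = gcd (f m) (f n)) : IsStrongDvdSequence f := by
  have gcd_add_mul_self : ∀ r n k, gcd (f (r + k * n)) (f n) = gcd (f r) (f n) := by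
    intro r n k
    induction k with
    | zero => simp
    | succ k ih => rw [add_mul, one_mul, ← add_assoc, h, ih]
  intro m n
  induction m, n using Nat.gcd.induction with
  | H0 n => simp [h0]
  | H1 m n _ ih =>
    rw [gcd_rec m n, ← ih, gcd_comm (f m), ← gcd_add_mul_self (n % m) m (n / m), mul_comm,
      mod_add_div]

structure IsLucasSequence (P Q : ℤ) (U : ℕ → ℤ) : Prop where
  zero : U 0 = 0
  one : U 1 = 1
  add_two : ∀ n, U (n + 2) = P * U (n + 1) + Q * U n

namespace IsLucasSequence

variable {P Q : ℤ} {U : ℕ → ℤ}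

theorem two (hU : IsLucasSequence P Q U) : U 2 = P := by
  simpa [hU.zero, hU.one] using hU.add_two 0

theorem add_add_one (hU : IsLucasSequence P Q U) (m n : ℕ) :
    U (m + n + 1) = U (m + 1) * U (n + 1) + Q * U m * U n := by
  induction n using Nat.twoStepInduction with
  | zero => simp [hU.zero, hU.one]
  | one => rw [hU.add_two m, hU.two, hU.one]; ring
  | more n ih₀ ih₁ =>
    rw [← add_assoc] at ih₁
    rw [show m + (n + 2) + 1 = m + n + 1 + 2 by ring, hU.add_two]
    linear_combination
      P * ih₁ + Q * ih₀ - U (m + 1) * hU.add_two (n + 1) - Q * U m * hU.add_two n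

theorem isCoprime_succ (hU : IsLucasSequence P Q U) (hQ : IsUnit Q) (n : ℕ) :
    IsCoprime (U n) (U (n + 1)) := by
  induction n with
  | zero => simp [hU.zero, hU.one, isCoprime_one_right]
  | succ n ih =>
    rw [hU.add_two, add_comm (P * _), IsCoprime.add_mul_right_right_iff,
      isCoprime_mul_unit_left_right hQ]
    exact ih.symm

theorem gcd_add_self (hU : IsLucasSequence P Q U) (hQ : IsUnit Q) (m n : ℕ) :
    Int.gcd (U (m + n)) (U n) = Int.gcd (U m) (U n) := by
  cases n with
  | zero => rfl
  | succ n =>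
    have hcop : Int.gcd (U (n + 1)) (U n) = 1 :=
      Int.isCoprime_iff_gcd_eq_one.mp (hU.isCoprime_succ hQ n).symm
    have hQcop : Int.gcd (U (n + 1)) Q = 1 := Int.isCoprime_iff_gcd_eq_one.mp <| by
      simpa using (isCoprime_mul_unit_left_right hQ _ 1).mpr isCoprime_one_right
    rw [← add_assoc, hU.add_add_one, Int.gcd_comm, Int.gcd_comm (U m), add_comm (_ * _),
      Int.gcd_add_mul_right_right, Int.gcd_mul_left_right_of_gcd_eq_one hcop, mul_comm,
      Int.gcd_mul_left_right_of_gcd_eq_one hQcop]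

theorem isStrongDvdSequence_natAbs (hU : IsLucasSequence P Q U) (hQ : IsUnit Q) :
    Nat.IsStrongDvdSequence fun n ↦ (U n).natAbs :=
  .of_gcd_add_self (by simp [hU.zero]) (hU.gcd_add_self hQ)

end IsLucasSequence

theorem lucas_strong_divisibility
    (P Q : ℤ) (hQ : Q = 1 ∨ Q = -1)
    (U : ℕ → ℤ) (h0 : U 0 = 0) (h1 : U 1 = 1)
    (hrec : ∀ n, U (n + 2) = P * U (n + 1) + Q * U n) :
    ∀ a b : ℕ, 1 ≤ a → 1 ≤ b →
      Int.gcd (U a) (U b) = (U (Nat.gcd a b)).natAbs := fun a b _ _ ↦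
  IsLucasSequence.isStrongDvdSequence_natAbs ⟨h0, h1, hrec⟩ (Int.isUnit_iff.mpr hQ) a b
end

section
/- Let U be the Lucas sequence with parameters P, Q where Q = ±1. If a and b are coprime positive integers, then gcd(U_a, U_b) = 1. -/
/-!
Writing `U` for the sequence, the addition formula
`U (m + n + 1) = U (m + 1) * U (n + 1) + Q * U m * U n` together with the coprimality of consecutive
terms (which needs `Q` to be a unit) shows that `U (j + m)` is coprime to `U m` as soon as `U j` is.
Hence coprimality of `U a` and `U b` propagates along the Euclidean algorithm on `(a, b)`, down to
the pair `(0, 1)`, where `U 0 = 0` and `U 1 = 1`.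
-/

structure IsLucasSeq {R : Type*} [CommRing R] (P Q : R) (U : ℕ → R) : Prop where
  zero : U 0 = 0
  one : U 1 = 1
  add_two : ∀ n, U (n + 2) = P * U (n + 1) + Q * U n

namespace IsLucasSeq

variable {R : Type*} [CommRing R] {P Q : R} {U : ℕ → R}

theorem add_succ (hU : IsLucasSeq P Q U) (m n : ℕ) :
    U (m + n + 1) = U (m + 1) * U (n + 1) + Q * U m * U n := by
  induction m generalizing n with
  | zero => simp [hU.zero, hU.one]
  | succ m ih =>
    calc U (m + 1 + n + 1) = U (m + (n + 1) + 1) := congrArg U (by omega)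
      _ = U (m + 1) * U (n + 2) + Q * U m * U (n + 1) := ih (n + 1)
      _ = U (m + 2) * U (n + 1) + Q * U (m + 1) * U n := by rw [hU.add_two, hU.add_two]; ring

theorem isCoprime_succ (hU : IsLucasSeq P Q U) (hQ : IsUnit Q) (n : ℕ) :
    IsCoprime (U n) (U (n + 1)) := by
  induction n with
  | zero => rw [hU.zero, hU.one]; exact isCoprime_one_right
  | succ n ih =>
    rw [hU.add_two, IsCoprime.mul_add_right_right_iff, isCoprime_mul_unit_left_right hQ]
    exact ih.symm

theorem isCoprime_add_right (hU : IsLucasSeq P Q U) (hQ : IsUnit Q) {j m : ℕ}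
    (h : IsCoprime (U j) (U m)) : IsCoprime (U (j + m)) (U m) := by
  cases m with
  | zero => simpa using h
  | succ n =>
    rw [← add_assoc, hU.add_succ, add_comm, IsCoprime.add_mul_right_left_iff, mul_assoc,
      isCoprime_mul_unit_left_left hQ]
    exact h.mul_left (hU.isCoprime_succ hQ n)

theorem isCoprime_add_mul (hU : IsLucasSeq P Q U) (hQ : IsUnit Q) {r m : ℕ}
    (h : IsCoprime (U r) (U m)) (k : ℕ) : IsCoprime (U (r + m * k)) (U m) := by
  induction k with
  | zero => simpa using h
  | succ k ih => simpa only [mul_add_one, ← add_assoc] using hU.isCoprime_add_right hQ ih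

theorem isCoprime_of_coprime (hU : IsLucasSeq P Q U) (hQ : IsUnit Q) {a b : ℕ}
    (hab : Nat.Coprime a b) : IsCoprime (U a) (U b) := by
  induction a, b using Nat.gcd.induction with
  | H0 n =>
    rw [(Nat.coprime_zero_left n).mp hab, hU.zero, hU.one]
    exact isCoprime_one_right
  | H1 m n _ ih =>
    have hmod : Nat.Coprime (n % m) m := by rwa [Nat.Coprime, ← Nat.gcd_rec]
    simpa only [Nat.mod_add_div] using (hU.isCoprime_add_mul hQ (ih hmod) (n / m)).symm

end IsLucasSeq

theorem lucas_coprime_indices_coprime_terms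
    (P Q : ℤ) (hQ : Q = 1 ∨ Q = -1)
    (U : ℕ → ℤ) (h0 : U 0 = 0) (h1 : U 1 = 1)
    (hrec : ∀ n, U (n + 2) = P * U (n + 1) + Q * U n) :
    ∀ a b : ℕ, 1 ≤ a → 1 ≤ b → Nat.Coprime a b →
      Int.gcd (U a) (U b) = 1 := by
  intro a b _ _ hab
  have hU : IsLucasSeq P Q U := ⟨h0, h1, hrec⟩
  exact Int.isCoprime_iff_gcd_eq_one.mp (hU.isCoprime_of_coprime (Int.isUnit_iff.mpr hQ) hab)
end

section
/- Let U be the Lucas sequence with parameters P, Q where Q = ±1, let A be a nonzero integer, and let n_1, …, n_r be pairwise coprime positive integers with each U_{n_i} ≠ 0. If A·y² = U_{n_1}·…·U_{n_r} for some integer y, then for every prime p not dividing A and every index i, the p-adic valuation v_p(U_{n_i}) is even. -/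
section Aux

variable {P Q : ℤ} {U : ℕ → ℤ}

/-- Addition formula for Lucas sequences. -/
lemma lucas_add (h0 : U 0 = 0) (h1 : U 1 = 1)
    (hrec : ∀ n, U (n + 2) = P * U (n + 1) + Q * U n) :
    ∀ a b : ℕ, U (a + b + 1) = U (a + 1) * U (b + 1) + Q * U a * U b := by
  intro a b
  induction b using Nat.twoStepInduction generalizing a with
  | zero => simp [h0, h1]
  | one =>
    have h2 : U 2 = P := by have := hrec 0; simp [h0, h1] at this; simpa using this
    have := hrec a
    simp only [h1, h2]
    rw [show a + 1 + 1 = a + 2 from rfl, this]; ring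
  | more b ih1 ih2 =>
    have e1 : a + (b + 2) + 1 = (a + b + 1) + 2 := by ring
    have e2 : a + (b + 1) + 1 = (a + b + 1) + 1 := by ring
    rw [e1, hrec (a + b + 1), show a + b + 1 + 1 = a + (b + 1) + 1 by omega,
      ih2 a, ih1 a,
      show b + 2 + 1 = b + 1 + 2 from rfl, hrec (b + 1),
      show b + 1 + 1 = b + 2 from rfl, hrec b]
    ring

/-- Consecutive terms are coprime. -/
lemma lucas_consec (hQ : Q = 1 ∨ Q = -1) (h0 : U 0 = 0) (h1 : U 1 = 1)
    (hrec : ∀ n, U (n + 2) = P * U (n + 1) + Q * U n) :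
    ∀ m : ℕ, IsCoprime (U m) (U (m + 1)) := by
  have hQu : IsUnit Q := Int.isUnit_iff.mpr hQ
  intro m
  induction m with
  | zero => rw [h0, zero_add, h1]; exact isCoprime_one_right
  | succ m ih =>
    rw [show m + 1 + 1 = m + 2 from rfl, hrec m]
    have : IsCoprime (U (m + 1)) (Q * U m) :=
      (isCoprime_mul_unit_left_right hQu _ _).mpr ih.symm
    have := this.add_mul_left_right P
    rwa [show Q * U m + U (m + 1) * P = P * U (m + 1) + Q * U m by ring] at this

/-- Terms at coprime positive indices are coprime. -/
lemma lucas_coprime (hQ : Q = 1 ∨ Q = -1) (h0 : U 0 = 0) (h1 : U 1 = 1)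
    (hrec : ∀ n, U (n + 2) = P * U (n + 1) + Q * U n) :
    ∀ m k : ℕ, Nat.Coprime m k → 0 < m → 0 < k → IsCoprime (U m) (U k) := by
  have key : ∀ N m k : ℕ, m + k ≤ N → Nat.Coprime m k → 0 < m → 0 < k →
      IsCoprime (U m) (U k) := by
    intro N
    induction N with
    | zero => intro m k h _ hm hk; omega
    | succ N ih =>
      intro m k hN hco hm hk
      rcases lt_trichotomy m k with hlt | heq | hgt
      · -- k = m + d with d = k - m
        set d := k - m with hd
        have hdpos : 0 < d := by omega
        have hcod : Nat.Coprime m d := (Nat.coprime_sub_self_right hlt.le).mpr hco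
        have hmd : IsCoprime (U m) (U d) := by
          rcases le_or_gt m d with h' | h'
          · exact ih m d (by omega) hcod hm hdpos
          · exact (ih d m (by omega) hcod.symm hdpos hm).symm
        have hform : U k = U d * U (m + 1) + Q * U (d - 1) * U m := by
          have := lucas_add h0 h1 hrec (d - 1) m
          rw [show d - 1 + m + 1 = k by omega, show d - 1 + 1 = d by omega] at this
          exact this
        rw [hform]
        have h2 : IsCoprime (U m) (U d * U (m + 1)) :=
          hmd.mul_right (lucas_consec hQ h0 h1 hrec m)
        exact h2.add_mul_right_right _
      · subst heq
        have : m = 1 := by simpa [Nat.Coprime] using hco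
        subst this; rw [h1]; exact isCoprime_one_left
      · -- symmetric
        have hcod : Nat.Coprime k m := hco.symm
        set d := m - k with hd
        have hdpos : 0 < d := by omega
        have hcod2 : Nat.Coprime k d := (Nat.coprime_sub_self_right hgt.le).mpr hcod
        have hkd : IsCoprime (U k) (U d) := by
          rcases le_or_gt k d with h' | h'
          · exact ih k d (by omega) hcod2 hk hdpos
          · exact (ih d k (by omega) hcod2.symm hdpos hk).symm
        suffices h : IsCoprime (U k) (U m) from h.symm
        have hform : U m = U d * U (k + 1) + Q * U (d - 1) * U k := by
          have := lucas_add h0 h1 hrec (d - 1) k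
          rw [show d - 1 + k + 1 = m by omega, show d - 1 + 1 = d by omega] at this
          exact this
        rw [hform]
        have h2 : IsCoprime (U k) (U d * U (k + 1)) :=
          hkd.mul_right (lucas_consec hQ h0 h1 hrec k)
        exact h2.add_mul_right_right _
  intro m k hco hm hk
  exact key (m + k) m k le_rfl hco hm hk

end Aux

theorem lucas_valuation_parity
    (P Q : ℤ) (hQ : Q = 1 ∨ Q = -1)
    (U : ℕ → ℤ) (h0 : U 0 = 0) (h1 : U 1 = 1)
    (hrec : ∀ n, U (n + 2) = P * U (n + 1) + Q * U n)
    (A : ℤ) (hA : A ≠ 0)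
    (r : ℕ) (n : Fin r → ℕ) (hpos : ∀ i, 0 < n i)
    (hcop : ∀ i j, i ≠ j → Nat.Coprime (n i) (n j))
    (hne : ∀ i, U (n i) ≠ 0)
    (y : ℤ) (heq : A * y ^ 2 = ∏ i, U (n i)) :
    ∀ p : ℕ, p.Prime → ¬ ((p : ℤ) ∣ A) →
      ∀ i, Even (padicValInt p (U (n i))) := by
  intro p hp hpA i
  haveI : Fact p.Prime := ⟨hp⟩
  have hpint : Prime (p : ℤ) := Nat.prime_iff_prime_int.mp hp
  by_cases hdvd : (p : ℤ) ∣ U (n i)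
  · -- p divides U (n i); it divides no other factor
    have hy : y ≠ 0 := by
      intro hy0
      rw [hy0] at heq
      simp only [ne_eq] at hne
      have : (∏ j, U (n j)) ≠ 0 := Finset.prod_ne_zero_iff.mpr fun j _ => hne j
      simp at heq; exact this heq.symm
    have hsplit : (∏ j, U (n j)) = U (n i) * ∏ j ∈ Finset.univ.erase i, U (n j) :=
      (Finset.mul_prod_erase Finset.univ _ (Finset.mem_univ i)).symm
    have hrestne : (∏ j ∈ Finset.univ.erase i, U (n j)) ≠ 0 :=
      Finset.prod_ne_zero_iff.mpr fun j _ => hne j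
    have hrestnd : ¬ (p : ℤ) ∣ ∏ j ∈ Finset.univ.erase i, U (n j) := by
      apply hpint.not_dvd_finset_prod
      intro j hj
      have hji : j ≠ i := Finset.ne_of_mem_erase hj
      have hcij : IsCoprime (U (n i)) (U (n j)) :=
        lucas_coprime hQ h0 h1 hrec _ _ (hcop i j hji.symm) (hpos i) (hpos j)
      intro hdj
      exact hpint.not_unit (hcij.isUnit_of_dvd' hdvd hdj)
    have hy2 : y ^ 2 ≠ 0 := pow_ne_zero _ hy
    have hval1 : padicValInt p (A * y ^ 2) =
        padicValInt p y + padicValInt p y := by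
      rw [padicValInt.mul hA hy2, padicValInt.eq_zero_of_not_dvd hpA,
        show y ^ 2 = y * y by ring, padicValInt.mul hy hy]
      omega
    have hval2 : padicValInt p (A * y ^ 2) = padicValInt p (U (n i)) := by
      rw [heq, hsplit, padicValInt.mul (hne i) hrestne,
        padicValInt.eq_zero_of_not_dvd hrestnd]
      omega
    rw [← hval2, hval1]
    exact ⟨padicValInt p y, rfl⟩
  · rw [padicValInt.eq_zero_of_not_dvd hdvd]
    exact Even.zero
end

section
/- Let U be the Lucas sequence with parameters P, Q where Q = ±1, with discriminant Δ = P² + 4Q. Suppose m, n are coprime positive integers with U_m, U_n nonzero and Δ·y² = U_m·U_n for some integer y. Then there exist squarefree integers e_m, e_n and integers s_m, s_n such that U_m = e_m·s_m², U_n = e_n·s_n², and |e_m| and |e_n| both divide the radical (product of distinct prime divisors) of Δ. -/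
theorem lucas_two_term_rigidity
    (P Q : ℤ) (hQ : Q = 1 ∨ Q = -1)
    (U : ℕ → ℤ) (h0 : U 0 = 0) (h1 : U 1 = 1)
    (hrec : ∀ n, U (n + 2) = P * U (n + 1) + Q * U n)
    (Δ : ℤ) (hΔ : Δ = P ^ 2 + 4 * Q) (hΔ0 : Δ ≠ 0)
    (m n : ℕ) (hm : 1 ≤ m) (hn : 1 ≤ n) (hmn : Nat.Coprime m n)
    (hUm : U m ≠ 0) (hUn : U n ≠ 0)
    (y : ℤ) (heq : Δ * y ^ 2 = U m * U n) :
    ∃ em sm en sn : ℤ,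
      U m = em * sm ^ 2 ∧ U n = en * sn ^ 2 ∧
      Squarefree em ∧ Squarefree en ∧
      em.natAbs ∣ ∏ p ∈ Δ.natAbs.primeFactors, p ∧
      en.natAbs ∣ ∏ p ∈ Δ.natAbs.primeFactors, p := by
  have hQu : IsUnit Q := Int.isUnit_iff.mpr hQ
  have hQc : ∀ x : ℤ, IsCoprime Q x := by
    rcases hQ with rfl | rfl
    · exact fun x => isCoprime_one_left
    · exact fun x => isCoprime_one_left.neg_left
  have hU2 : U 2 = P := by
    have := hrec 0
    simp [h0, h1] at this
    simpa using this
  -- addition identity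
  have add_id : ∀ a b, U (a + b + 1) = U (a + 1) * U (b + 1) + Q * (U a * U b) := by
    intro a
    induction a using Nat.twoStepInduction with
    | zero => intro b; simp [h0, h1]
    | one =>
      intro b
      rw [show 1 + b + 1 = b + 2 from by ring, hrec b, hU2, h1]; ring
    | more a ih1 ih2 =>
      intro b
      have e1 := hrec (a + b + 1)
      have e2 := ih2 b
      have e3 := ih1 b
      have e4 := hrec (a + 1)
      rw [show a + 2 + b + 1 = a + b + 1 + 2 from by ring, e1,
        show a + b + 1 + 1 = a + 1 + b + 1 from by ring, e2, e3,
        show a + 2 + 1 = a + 1 + 2 from by ring, e4, hrec a]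
      ring
  -- consecutive terms are coprime
  have hcons : ∀ k, IsCoprime (U k) (U (k + 1)) := by
    intro k
    induction k with
    | zero => rw [h0]; exact isCoprime_zero_left.mpr (by rw [h1]; exact isUnit_one)
    | succ k ih =>
      rw [hrec k, show P * U (k + 1) + Q * U k = Q * U k + U (k + 1) * P from by ring]
      exact ((hQc (U (k+1))).symm.mul_right ih.symm).add_mul_left_right P
  -- strong divisibility
  have hstrong : ∀ N a b, a + b ≤ N → 1 ≤ a → 1 ≤ b → Nat.Coprime a b →
      IsCoprime (U a) (U b) := by
    intro N
    induction N with
    | zero => intro a b h ha hb _; omega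
    | succ N ih =>
      have key : ∀ a b, a + b ≤ N + 1 → 1 ≤ a → a < b → Nat.Coprime a b →
          IsCoprime (U a) (U b) := by
        intro a b hab ha hlt hcop
        obtain ⟨k, rfl⟩ : ∃ k, a = k + 1 := ⟨a - 1, by omega⟩
        set t := b - (k + 1) with htdef
        have hb : b = t + (k + 1) := by omega
        have h1t : 1 ≤ t := by omega
        have hcop' : Nat.Coprime (k + 1) t := by
          have : Nat.Coprime (k + 1) (t + (k + 1)) := by rw [← hb]; exact hcop
          exact Nat.coprime_add_self_right.mp this
        have hib := ih (k + 1) t (by omega) (by omega) h1t hcop'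
        have hUb : U b = U (t + 1) * U (k + 1) + Q * (U t * U k) := by
          rw [hb, show t + (k + 1) = t + k + 1 from by ring]; exact add_id t k
        rw [hUb, show U (t + 1) * U (k + 1) + Q * (U t * U k)
            = Q * (U t * U k) + U (k + 1) * U (t + 1) from by ring]
        exact ((hQc (U (k+1))).symm.mul_right
          (hib.mul_right (hcons k).symm)).add_mul_left_right _
      intro a b hab ha hb hcop
      rcases lt_trichotomy a b with h | h | h
      · exact key a b hab ha h hcop
      · subst h
        have : a = 1 := by rw [Nat.Coprime, Nat.gcd_self] at hcop; exact hcop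
        subst this
        rw [h1]; exact isCoprime_one_left
      · exact (key b a (by omega) hb h hcop.symm).symm
  have hUc : IsCoprime (U m) (U n) := hstrong (m + n) m n le_rfl hm hn hmn
  -- pass to natural numbers
  have hy0 : y ≠ 0 := by
    intro h
    rw [h] at heq
    simp at heq
    rcases heq with h | h
    · exact hUm h
    · exact hUn h
  have hD0 : Δ.natAbs ≠ 0 := Int.natAbs_ne_zero.mpr hΔ0
  have hY0 : y.natAbs ≠ 0 := Int.natAbs_ne_zero.mpr hy0
  have habs : Δ.natAbs * y.natAbs ^ 2 = (U m).natAbs * (U n).natAbs := by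
    have := congrArg Int.natAbs heq
    simpa [Int.natAbs_mul, Int.natAbs_pow] using this
  have hcop_ab : Nat.Coprime (U m).natAbs (U n).natAbs :=
    Int.isCoprime_iff_gcd_eq_one.mp hUc
  -- main decomposition claim
  have main : ∀ x z : ℤ, x ≠ 0 → z ≠ 0 → Nat.Coprime x.natAbs z.natAbs →
      Δ.natAbs * y.natAbs ^ 2 = x.natAbs * z.natAbs →
      ∃ e s : ℤ, x = e * s ^ 2 ∧ Squarefree e ∧
        e.natAbs ∣ ∏ p ∈ Δ.natAbs.primeFactors, p := by
    intro x z hx0 hz0 hcop hfac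
    obtain ⟨e, s, hes, hsf⟩ := Nat.sq_mul_squarefree x.natAbs
    have ha0 : x.natAbs ≠ 0 := Int.natAbs_ne_zero.mpr hx0
    have hb0 : z.natAbs ≠ 0 := Int.natAbs_ne_zero.mpr hz0
    have hs0 : s ≠ 0 := by rintro rfl; simp at hes; exact ha0 hes.symm
    have he0 : e ≠ 0 := by rintro rfl; simp at hes; exact ha0 hes.symm
    -- every prime dividing e divides Δ
    have claim : ∀ p, p.Prime → p ∣ e → p ∣ Δ.natAbs := by
      intro p hp hpe
      have hpa : p ∣ x.natAbs := hpe.trans ⟨s ^ 2, by rw [← hes]; ring⟩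
      have hbfac : z.natAbs.factorization p = 0 := by
        apply Nat.factorization_eq_zero_of_not_dvd
        intro hpb
        have : p ∣ Nat.gcd x.natAbs z.natAbs := Nat.dvd_gcd hpa hpb
        rw [hcop] at this
        exact hp.one_lt.ne' (Nat.dvd_one.mp this)
      have hefac : e.factorization p = 1 := by
        have h1 : e.factorization p ≤ 1 := hsf.natFactorization_le_one p
        have h2 : 0 < e.factorization p :=
          Nat.Prime.factorization_pos_of_dvd hp he0 hpe
        omega
      have hafac : x.natAbs.factorization p = 2 * s.factorization p + 1 := by
        have h := congrArg Nat.factorization hes.symm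
        rw [Nat.factorization_mul (pow_ne_zero 2 hs0) he0, Nat.factorization_pow] at h
        have := congrArg (fun f => f p) h
        simp at this
        omega
      have heq2 : Δ.natAbs.factorization p + 2 * y.natAbs.factorization p
          = x.natAbs.factorization p + z.natAbs.factorization p := by
        have h := congrArg Nat.factorization hfac
        rw [Nat.factorization_mul hD0 (pow_ne_zero 2 hY0),
          Nat.factorization_mul ha0 hb0, Nat.factorization_pow] at h
        have := congrArg (fun f => f p) h
        simpa using this
      have : 1 ≤ Δ.natAbs.factorization p := by omega
      exact (Nat.Prime.dvd_iff_one_le_factorization hp hD0).mpr this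
    have hsub : e.primeFactors ⊆ Δ.natAbs.primeFactors := by
      intro p hp
      rw [Nat.mem_primeFactors] at hp ⊢
      exact ⟨hp.1, claim p hp.1 hp.2.1, hD0⟩
    have hedvd : e ∣ ∏ p ∈ Δ.natAbs.primeFactors, p := by
      have := Finset.prod_dvd_prod_of_subset e.primeFactors Δ.natAbs.primeFactors
        (fun p => p) hsub
      rwa [Nat.prod_primeFactors_of_squarefree hsf] at this
    rcases Int.natAbs_eq x with hx | hx
    · refine ⟨(e : ℤ), (s : ℤ), ?_, ?_, ?_⟩
      · rw [hx, ← hes]; push_cast; ring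
      · exact Int.squarefree_natCast.mpr hsf
      · simpa using hedvd
    · refine ⟨-(e : ℤ), (s : ℤ), ?_, ?_, ?_⟩
      · rw [hx, ← hes]; push_cast; ring
      · rw [← Int.squarefree_natAbs]; simpa using hsf
      · simpa using hedvd
  obtain ⟨em, sm, h1m, h2m, h3m⟩ := main (U m) (U n) hUm hUn hcop_ab habs
  obtain ⟨en, sn, h1n, h2n, h3n⟩ := main (U n) (U m) hUn hUm hcop_ab.symm
    (by rw [habs]; ring)
  exact ⟨em, sm, en, sn, h1m, h1n, h2m, h2n, h3m, h3n⟩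
end

section
/- Let U be the Lucas sequence with parameters P, Q where Q = ±1, let k ≥ 2 and A ∈ ℤ \ {0}, and let n_1, …, n_r be pairwise coprime positive integers with all terms nonzero. If A·y^k = U_{n_1}·…·U_{n_r} for some integer y, then each U_{n_i} can be written as U_{n_i} = e_i·s_i^k where s_i ≥ 1, e_i is k-th-power-free (p^k ∤ e_i for all primes p), and every prime dividing e_i divides A. -/
/-!
For `Q = ±1` the addition formula `U (m + n + 1) = U (m + 1) * U (n + 1) + Q * U m * U n` and the
coprimality of consecutive terms show that `U m` is coprime to `U (m + n)` iff it is coprime to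
`U n`; running the Euclidean algorithm on the indices, terms with coprime indices are coprime. So
`U (n i)` is coprime to the product `R` of the other terms. Write `U (n i) = e * s ^ k` with `e`
free of `k`-th powers. A prime `p ∣ e` does not divide `R`, so if it did not divide `A` either,
comparing `p`-adic valuations in `e * s ^ k * R = A * y ^ k` would make `k` divide
`v_p(e) ∈ (0, k)`.
-/

open Finset

def lucasU (P Q : ℤ) : ℕ → ℤ
  | 0 => 0
  | 1 => 1
  | n + 2 => P * lucasU P Q (n + 1) + Q * lucasU P Q n

section Lucas

variable {P Q : ℤ}

theorem eq_lucasU {U : ℕ → ℤ} (h0 : U 0 = 0) (h1 : U 1 = 1)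
    (hrec : ∀ n, U (n + 2) = P * U (n + 1) + Q * U n) : U = lucasU P Q := by
  funext n
  induction n using Nat.twoStepInduction with
  | zero => exact h0
  | one => exact h1
  | more n ih ih' => rw [hrec, ih, ih', lucasU]

theorem lucasU_add_add_one (m n : ℕ) :
    lucasU P Q (m + n + 1) =
      lucasU P Q (m + 1) * lucasU P Q (n + 1) + Q * lucasU P Q m * lucasU P Q n := by
  induction n using Nat.twoStepInduction with
  | zero => simp [lucasU]
  | one => simp only [lucasU]; ring
  | more n ih ih' =>
    rw [show m + (n + 2) + 1 = m + n + 1 + 2 by omega, lucasU,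
      show m + n + 1 + 1 = m + (n + 1) + 1 by omega, ih', ih]
    simp only [lucasU]
    ring

theorem isCoprime_lucasU_succ (hQ : IsUnit Q) (n : ℕ) :
    IsCoprime (lucasU P Q n) (lucasU P Q (n + 1)) := by
  induction n with
  | zero => simp [lucasU, isCoprime_one_right]
  | succ n ih =>
    rw [lucasU, mul_comm P, IsCoprime.mul_add_left_right_iff, isCoprime_mul_unit_left_right hQ]
    exact ih.symm

theorem isCoprime_lucasU_add_iff (hQ : IsUnit Q) (m n : ℕ) :
    IsCoprime (lucasU P Q m) (lucasU P Q (m + n)) ↔ IsCoprime (lucasU P Q m) (lucasU P Q n) := by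
  cases m with
  | zero => simp
  | succ m =>
    rw [add_right_comm, lucasU_add_add_one, IsCoprime.mul_add_left_right_iff,
      IsCoprime.mul_right_iff, isCoprime_mul_unit_left_right hQ, and_iff_right]
    exact (isCoprime_lucasU_succ hQ m).symm

theorem isCoprime_lucasU_add_mul_iff (hQ : IsUnit Q) (m n q : ℕ) :
    IsCoprime (lucasU P Q m) (lucasU P Q (n + m * q)) ↔
      IsCoprime (lucasU P Q m) (lucasU P Q n) := by
  induction q with
  | zero => simp
  | succ q ih => rw [mul_add_one, ← add_assoc, add_comm, isCoprime_lucasU_add_iff hQ, ih]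

theorem Nat.Coprime.isCoprime_lucasU (hQ : IsUnit Q) {a b : ℕ} (h : a.Coprime b) :
    IsCoprime (lucasU P Q a) (lucasU P Q b) := by
  induction a, b using Nat.gcd.induction with
  | H0 n =>
    rw [Nat.coprime_zero_left] at h
    simp [h, lucasU, isCoprime_one_right]
  | H1 m n _ ih =>
    rw [← Nat.mod_add_div n m, isCoprime_lucasU_add_mul_iff hQ]
    exact (ih (by rwa [Nat.Coprime, ← Nat.gcd_rec])).symm

end Lucas

theorem padicValInt_pow {p : ℕ} [Fact p.Prime] {y : ℤ} (k : ℕ) :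
    padicValInt p (y ^ k) = k * padicValInt p y := by
  rw [padicValInt, Int.natAbs_pow, padicValNat.pow, padicValInt]

theorem Int.exists_eq_mul_pow_of_ne_zero {k : ℕ} (hk : k ≠ 0) {a : ℤ} (ha : a ≠ 0) :
    ∃ e s : ℤ, 1 ≤ s ∧ a = e * s ^ k ∧
      ∀ p : ℕ, p.Prime → ¬ (p : ℤ) ^ k ∣ e := by
  by_cases hfree : ∀ p : ℕ, p.Prime → ¬ (p : ℤ) ^ k ∣ a
  · exact ⟨a, 1, le_rfl, by rw [one_pow, mul_one], hfree⟩
  push Not at hfree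
  obtain ⟨p, hp, b, rfl⟩ := hfree
  have hb : b ≠ 0 := right_ne_zero_of_mul ha
  have hlt : b.natAbs < ((p : ℤ) ^ k * b).natAbs := by
    rw [Int.natAbs_mul, Int.natAbs_pow, Int.natAbs_natCast]
    exact lt_mul_left (Int.natAbs_pos.mpr hb) (Nat.one_lt_pow hk hp.one_lt)
  obtain ⟨e, s, hs, rfl, he⟩ := Int.exists_eq_mul_pow_of_ne_zero hk hb
  exact ⟨e, p * s, one_le_mul_of_one_le_of_one_le (by exact_mod_cast hp.one_le) hs,
    by ring, he⟩
termination_by a.natAbs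

theorem Int.prime_dvd_of_mul_pow_mul_eq_mul_pow {p k : ℕ} (hp : p.Prime) {e s R A y : ℤ}
    (h : e * s ^ k * R = A * y ^ k) (h0 : e * s ^ k * R ≠ 0) (hpe : (p : ℤ) ∣ e)
    (he : ¬ (p : ℤ) ^ k ∣ e) (hR : ¬ (p : ℤ) ∣ R) : (p : ℤ) ∣ A := by
  have := Fact.mk hp
  by_contra hA
  obtain ⟨hes0, hR0⟩ := mul_ne_zero_iff.mp h0
  obtain ⟨he0, hs0⟩ := mul_ne_zero_iff.mp hes0
  obtain ⟨hA0, hy0⟩ := mul_ne_zero_iff.mp (h ▸ h0)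
  have hval := congrArg (padicValInt p) h
  rw [padicValInt.mul hes0 hR0, padicValInt.mul he0 hs0, padicValInt.mul hA0 hy0,
    padicValInt_pow, padicValInt_pow,
    padicValInt.eq_zero_of_not_dvd hR, padicValInt.eq_zero_of_not_dvd hA, add_zero,
    zero_add] at hval
  have hpos : 0 < padicValInt p e := by
    have := (padicValInt_dvd_iff 1 e).mp (by simpa using hpe)
    omega
  have hlt : padicValInt p e < k := by
    by_contra! hle
    exact he ((padicValInt_dvd_iff k e).mpr (Or.inr hle))
  have hdvd : k ∣ padicValInt p e :=
    (Nat.dvd_add_left (dvd_mul_right k _)).mp (hval ▸ dvd_mul_right k _)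
  exact hpos.ne' (Nat.eq_zero_of_dvd_of_lt hdvd hlt)

theorem Int.exists_eq_mul_pow_of_isCoprime_of_mul_eq_mul_pow {k : ℕ} (hk : k ≠ 0)
    {u R A y : ℤ} (hu : u ≠ 0) (hR : R ≠ 0) (hcop : IsCoprime u R) (h : u * R = A * y ^ k) :
    ∃ e s : ℤ, 1 ≤ s ∧ u = e * s ^ k ∧ (∀ p : ℕ, p.Prime → ¬ (p : ℤ) ^ k ∣ e) ∧
      ∀ p : ℕ, p.Prime → (p : ℤ) ∣ e → (p : ℤ) ∣ A := by
  obtain ⟨e, s, hs, rfl, he⟩ := Int.exists_eq_mul_pow_of_ne_zero hk hu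
  refine ⟨e, s, hs, rfl, he, fun p hp hpe ↦ ?_⟩
  refine Int.prime_dvd_of_mul_pow_mul_eq_mul_pow hp h (mul_ne_zero hu hR) hpe (he p hp) ?_
  exact fun hpR ↦ (Nat.prime_iff_prime_int.mp hp).not_isUnit
    (hcop.isUnit_of_dvd' (hpe.mul_right _) hpR)

theorem lucas_power_class_rigidity_general
    (P Q : ℤ) (hQ : Q = 1 ∨ Q = -1)
    (U : ℕ → ℤ) (h0 : U 0 = 0) (h1 : U 1 = 1)
    (hrec : ∀ n, U (n + 2) = P * U (n + 1) + Q * U n)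
    (k : ℕ) (hk : 2 ≤ k)
    (A : ℤ)
    (r : ℕ) (n : Fin r → ℕ)
    (hcop : ∀ i j, i ≠ j → Nat.Coprime (n i) (n j))
    (hne : ∀ i, U (n i) ≠ 0)
    (y : ℤ) (heq : A * y ^ k = ∏ i, U (n i)) :
    ∀ i, ∃ e s : ℤ, 1 ≤ s ∧ U (n i) = e * s ^ k ∧
      (∀ p : ℕ, p.Prime → ¬ ((p : ℤ) ^ k ∣ e)) ∧
      (∀ p : ℕ, p.Prime → (p : ℤ) ∣ e → (p : ℤ) ∣ A) := by
  obtain rfl : U = lucasU P Q := eq_lucasU h0 h1 hrec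
  intro i
  have hcopR : IsCoprime (lucasU P Q (n i)) (∏ j ∈ univ.erase i, lucasU P Q (n j)) :=
    IsCoprime.prod_right fun j hj ↦
      (hcop i j (ne_of_mem_erase hj).symm).isCoprime_lucasU (Int.isUnit_iff.mpr hQ)
  refine Int.exists_eq_mul_pow_of_isCoprime_of_mul_eq_mul_pow (y := y) (by omega) (hne i)
    (prod_ne_zero_iff.mpr fun j _ ↦ hne j) hcopR ?_
  rw [mul_prod_erase _ (fun j ↦ lucasU P Q (n j)) (mem_univ i), heq]

theorem lucas_power_class_rigidity
    (P Q : ℤ) (hQ : Q = 1 ∨ Q = -1)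
    (U : ℕ → ℤ) (h0 : U 0 = 0) (h1 : U 1 = 1)
    (hrec : ∀ n, U (n + 2) = P * U (n + 1) + Q * U n)
    (k : ℕ) (hk : 2 ≤ k)
    (A : ℤ) (hA : A ≠ 0)
    (r : ℕ) (n : Fin r → ℕ) (hpos : ∀ i, 0 < n i)
    (hcop : ∀ i j, i ≠ j → Nat.Coprime (n i) (n j))
    (hne : ∀ i, U (n i) ≠ 0)
    (y : ℤ) (heq : A * y ^ k = ∏ i, U (n i)) :
    ∀ i, ∃ e s : ℤ, 1 ≤ s ∧ U (n i) = e * s ^ k ∧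
      (∀ p : ℕ, p.Prime → ¬ ((p : ℤ) ^ k ∣ e)) ∧
      (∀ p : ℕ, p.Prime → (p : ℤ) ∣ e → (p : ℤ) ∣ A) :=
  lucas_power_class_rigidity_general P Q hQ U h0 h1 hrec k hk A r n hcop hne y heq
end
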